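/- The difference in efficiency bounds Var(D*) − Var(D_os) = odds(R=0)·E[Var(D|A,Y) | A=1]·P(A=1) equals zero if and only if P(A=1) = 0 or Var(D | A,Y) = 0 almost surely on {A=1} (i.e., D is a.s. a function of (A,Y) on the treated). -/

import Mathlib

open MeasureTheory ProbabilityTheory
open scoped ENNReal

/-- The σ-algebra generated by the pair `(A, Y)`. -/
def sigmaAY {Ω : Type*} (A Y : Ω → ℝ) : MeasurableSpace Ω :=
  MeasurableSpace.comap (fun ω => (A ω, Y ω)) inferInstance

/-- The conditional variance `Var(D | A,Y) = E[D² | A,Y] − E[D | A,Y]²`. -/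
noncomputable def condVarAY {Ω : Type*} [MeasurableSpace Ω] (μ : MeasureTheory.Measure Ω)
    (A Y D : Ω → ℝ) : Ω → ℝ :=
  fun ω => (μ[fun ω' => D ω' ^ 2 | sigmaAY A Y]) ω - ((μ[D | sigmaAY A Y]) ω) ^ 2

/-- Conditional expectation of `f` given the event `s`: `E(f | s)`. -/
noncomputable def cexp {Ω : Type*} [MeasurableSpace Ω] (μ : MeasureTheory.Measure Ω)
    (f : Ω → ℝ) (s : Set Ω) : ℝ :=
  (∫ ω in s, f ω ∂μ) / (μ s).toReal


/-!
Write `m = E[D | A, Y]` and `W = R / p - 1`. The two scores differ only on the treated,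
`D* = D_os + W · 1_{A=1} (D - m)`, and on `{A = 1}` the one-step score is `D` itself, so
`D_os · 1_{A=1} (D - m)` does not involve `R`. Under MCAR the weight `W` is centred and
independent of every function of `(Z, A, Y)`; hence the cross term vanishes and the variance grows
by `E[W²] · E[1_{A=1} (D - m)²] = (1 - p) / p · E[Var(D | A, Y); A = 1]`. The integrand is
nonnegative and `(1 - p) / p > 0`, so the gap vanishes exactly when `Var(D | A, Y) = 0` a.s. on
`{A = 1}`, which holds in particular when `P(A = 1) = 0`.
-/


namespace ProbabilityTheory

variable {Ω : Type*} {mΩ : MeasurableSpace Ω} {μ : Measure Ω}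

lemma IndepFun.of_measurable_comap_right {β γ δ : Type*} [MeasurableSpace β]
    [mγ : MeasurableSpace γ] [MeasurableSpace δ] {f : Ω → β} {g : Ω → γ} {h : Ω → δ}
    (hfg : IndepFun f g μ) (hh : Measurable[mγ.comap g] h) : IndepFun f h μ := by
  rw [IndepFun_iff_Indep] at hfg ⊢
  exact indep_of_indep_of_le_right hfg hh.comap_le

lemma variance_add_of_integral_eq_zero [IsProbabilityMeasure μ] {X V : Ω → ℝ}
    (hX : MemLp X 2 μ) (hV : MemLp V 2 μ) (hV0 : μ[V] = 0) (hXV : μ[X * V] = 0) :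
    Var[X + V; μ] = Var[X; μ] + μ[V ^ 2] := by
  rw [variance_add hX hV, covariance_eq_sub hX hV, variance_eq_sub hV, hV0, hXV]
  ring

lemma variance_add_mul_of_indepFun [IsProbabilityMeasure μ] {X W g : Ω → ℝ}
    (hX : MemLp X 2 μ) (hW : MemLp W ∞ μ) (hg : MemLp g 2 μ) (hW0 : μ[W] = 0)
    (hWg : IndepFun W g μ) (hWXg : IndepFun W (X * g) μ) :
    Var[X + W * g; μ] = Var[X; μ] + μ[W ^ 2] * μ[g ^ 2] := by
  have hsq : IndepFun (W ^ 2) (g ^ 2) μ := by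
    exact hWg.comp (φ := (· ^ 2)) (ψ := (· ^ 2)) (by fun_prop) (by fun_prop)
  rw [variance_add_of_integral_eq_zero hX (hg.mul hW), mul_pow,
    hsq.integral_mul_eq_mul_integral (hW.1.pow 2) (hg.1.pow 2)]
  · rw [hWg.integral_mul_eq_mul_integral hW.1 hg.1, hW0, zero_mul]
  · rw [mul_left_comm, hWXg.integral_mul_eq_mul_integral hW.1 (hX.1.mul hg.1), hW0, zero_mul]

end ProbabilityTheory

section Bernoulli

variable {Ω : Type*} [MeasurableSpace Ω] {μ : Measure Ω} {R : Ω → ℝ}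

lemma integral_comp_of_forall_eq_zero_or_eq_one [IsProbabilityMeasure μ] (hR : Measurable R)
    (hbin : ∀ ω, R ω = 0 ∨ R ω = 1) (f : ℝ → ℝ) :
    ∫ ω, f (R ω) ∂μ =
      (1 - μ.real {ω | R ω = 1}) * f 0 + μ.real {ω | R ω = 1} * f 1 := by
  have hs : MeasurableSet {ω | R ω = 1} := hR (measurableSet_singleton 1)
  have hf : (fun ω => f (R ω)) =
      fun ω => f 0 + (f 1 - f 0) * {ω | R ω = 1}.indicator 1 ω := by
    funext ω
    rcases hbin ω with h | h <;> simp [h]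
  rw [hf, integral_add (integrable_const _) (((integrable_const 1).indicator hs).const_mul _),
    integral_const_mul, integral_indicator_one hs]
  simp only [integral_const, probReal_univ, one_smul]
  ring

lemma memLp_top_comp_of_forall_eq_zero_or_eq_one (hR : Measurable R)
    (hbin : ∀ ω, R ω = 0 ∨ R ω = 1) {f : ℝ → ℝ} (hf : Measurable f) :
    MemLp (fun ω => f (R ω)) ∞ μ :=
  memLp_top_of_bound (hf.comp hR).aestronglyMeasurable (max ‖f 0‖ ‖f 1‖)
    (ae_of_all _ fun ω => by rcases hbin ω with h | h <;> simp [h])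

lemma integral_div_sub_one_of_forall_eq_zero_or_eq_one [IsProbabilityMeasure μ]
    (hR : Measurable R) (hbin : ∀ ω, R ω = 0 ∨ R ω = 1) {p : ℝ}
    (hp : p = μ.real {ω | R ω = 1}) (hp0 : p ≠ 0) :
    ∫ ω, (R ω / p - 1) ∂μ = 0 := by
  rw [integral_comp_of_forall_eq_zero_or_eq_one hR hbin (fun r => r / p - 1), ← hp]
  field_simp
  ring

lemma integral_div_sub_one_sq_of_forall_eq_zero_or_eq_one [IsProbabilityMeasure μ]
    (hR : Measurable R) (hbin : ∀ ω, R ω = 0 ∨ R ω = 1) {p : ℝ}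
    (hp : p = μ.real {ω | R ω = 1}) (hp0 : p ≠ 0) :
    ∫ ω, (R ω / p - 1) ^ 2 ∂μ = (1 - p) / p := by
  rw [integral_comp_of_forall_eq_zero_or_eq_one hR hbin (fun r => (r / p - 1) ^ 2), ← hp]
  field_simp
  ring

end Bernoulli

lemma cexp_mul_measure_toReal {Ω : Type*} [MeasurableSpace Ω] (μ : Measure Ω)
    [IsFiniteMeasure μ] (f : Ω → ℝ) (s : Set Ω) :
    cexp μ f s * (μ s).toReal = ∫ ω in s, f ω ∂μ := by
  rcases eq_or_ne (μ s) 0 with hs | hs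
  · rw [hs, Measure.restrict_eq_zero.mpr hs, ENNReal.toReal_zero, mul_zero, integral_zero_measure]
  · rw [cexp, div_mul_cancel₀]
    exact ENNReal.toReal_ne_zero.mpr ⟨hs, measure_ne_top μ s⟩

lemma setIntegral_eq_zero_iff_ae_imp_of_nonneg {Ω : Type*} [MeasurableSpace Ω]
    {μ : Measure Ω} {f : Ω → ℝ} {s : Set Ω} (hf : 0 ≤ᵐ[μ] f) (hfi : Integrable f μ)
    (hs : MeasurableSet s) :
    ∫ ω in s, f ω ∂μ = 0 ↔ ∀ᵐ ω ∂μ, ω ∈ s → f ω = 0 := by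
  rw [setIntegral_eq_zero_iff_of_nonneg_ae (ae_restrict_of_ae hf) hfi.integrableOn,
    Filter.EventuallyEq, ae_restrict_iff' hs]
  rfl

lemma measurableSet_sigmaAY_setOf_eq {Ω : Type*} {A Y : Ω → ℝ} (c : ℝ) :
    MeasurableSet[sigmaAY A Y] {ω | A ω = c} :=
  ⟨Prod.fst ⁻¹' {c}, measurable_fst (measurableSet_singleton c), rfl⟩

section ConditionalVariance

variable {Ω : Type*} [MeasurableSpace Ω] {μ : Measure Ω} {A Y D : Ω → ℝ}

lemma sigmaAY_le (hA : Measurable A) (hY : Measurable Y) :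
    sigmaAY A Y ≤ ‹MeasurableSpace Ω› :=
  (hA.prodMk hY).comap_le

lemma condVarAY_ae_eq_condVar [IsFiniteMeasure μ] (hA : Measurable A) (hY : Measurable Y)
    (hD : MemLp D 2 μ) : condVarAY μ A Y D =ᵐ[μ] Var[D; μ | sigmaAY A Y] :=
  (condVar_ae_eq_condExp_sq_sub_sq_condExp (sigmaAY_le hA hY) hD).symm

lemma condVarAY_nonneg [IsFiniteMeasure μ] (hA : Measurable A) (hY : Measurable Y)
    (hD : MemLp D 2 μ) : 0 ≤ᵐ[μ] condVarAY μ A Y D := by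
  filter_upwards [condVarAY_ae_eq_condVar hA hY hD,
    condExp_nonneg (m := sigmaAY A Y) (ae_of_all μ fun ω => sq_nonneg
      (D ω - (μ[D | sigmaAY A Y]) ω))] with ω hω hnn
  exact hω ▸ hnn

lemma integrable_condVarAY [IsFiniteMeasure μ] (hA : Measurable A) (hY : Measurable Y)
    (hD : MemLp D 2 μ) : Integrable (condVarAY μ A Y D) μ :=
  integrable_condVar.congr (condVarAY_ae_eq_condVar hA hY hD).symm

lemma setIntegral_condVarAY [IsFiniteMeasure μ] (hA : Measurable A) (hY : Measurable Y)
    (hD : MemLp D 2 μ) {s : Set Ω} (hs : MeasurableSet[sigmaAY A Y] s) :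
    ∫ ω in s, condVarAY μ A Y D ω ∂μ =
      ∫ ω in s, (D ω - (μ[D | sigmaAY A Y]) ω) ^ 2 ∂μ := by
  rw [← setIntegral_condVar (hm := sigmaAY_le hA hY)
    (hD.sub (hD.condExp one_le_two)).integrable_sq hs]
  exact setIntegral_congr_ae (sigmaAY_le hA hY s hs)
    ((condVarAY_ae_eq_condVar hA hY hD).mono fun _ h _ => h)

end ConditionalVariance

section Efficiency

variable {Ω β : Type*} [MeasurableSpace Ω] [mβ : MeasurableSpace β]

lemma variance_ipw_sub_variance_os (μ : Measure Ω) [IsProbabilityMeasure μ]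
    {A R Y D : Ω → ℝ} {ξ : Ω → β}
    (hA : Measurable A) (hR : Measurable R) (hY : Measurable Y)
    (hAbin : ∀ ω, A ω = 0 ∨ A ω = 1) (hRbin : ∀ ω, R ω = 0 ∨ R ω = 1)
    (hAYξ : sigmaAY A Y ≤ mβ.comap ξ) (hDξ : Measurable[mβ.comap ξ] D) (hD : MemLp D 2 μ)
    (hindep : IndepFun R ξ μ) {p : ℝ} (hp : p = μ.real {ω | R ω = 1}) (hp0 : 0 < p) :
    Var[fun ω => R ω / p * (D ω - (μ[D | sigmaAY A Y]) ω) + (μ[D | sigmaAY A Y]) ω; μ] -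
      Var[fun ω => (R ω * (1 - A ω) + A ω) / (A ω + (1 - A ω) * p) *
        (D ω - (μ[D | sigmaAY A Y]) ω) + (μ[D | sigmaAY A Y]) ω; μ] =
      (1 - p) / p * ∫ ω in {ω | A ω = 1}, (D ω - (μ[D | sigmaAY A Y]) ω) ^ 2 ∂μ := by
  set m := μ[D | sigmaAY A Y]
  set s := {ω | A ω = 1}
  set Dstar := fun ω => R ω / p * (D ω - m ω) + m ω
  set Dos := fun ω => (R ω * (1 - A ω) + A ω) / (A ω + (1 - A ω) * p) * (D ω - m ω) + m ω
  set W : Ω → ℝ := fun ω => R ω / p - 1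
  set g := s.indicator fun ω => D ω - m ω
  have hsplit : Dstar = Dos + W * g := by
    funext ω
    simp only [Dstar, Dos, W, g, s, Pi.add_apply, Pi.mul_apply, Set.indicator_apply,
      Set.mem_ofPred_eq]
    rcases hAbin ω with h | h
    · norm_num [h]
    · norm_num [h]
      ring
  have hDos_g : Dos * g = s.indicator fun ω => D ω * (D ω - m ω) := by
    funext ω
    rcases hAbin ω with h | h <;> simp [Dos, g, s, h]
  have hs : MeasurableSet[sigmaAY A Y] s := measurableSet_sigmaAY_setOf_eq 1
  have hmξ : Measurable[mβ.comap ξ] m := stronglyMeasurable_condExp.measurable.mono hAYξ le_rfl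
  have hsξ : MeasurableSet[mβ.comap ξ] s := hAYξ s hs
  have hW_indep : ∀ h : Ω → ℝ, Measurable[mβ.comap ξ] h → IndepFun W h μ := fun h hh =>
    (hindep.of_measurable_comap_right hh).comp (φ := fun r => r / p - 1) (by fun_prop)
      measurable_id
  have he : MemLp (fun ω => D ω - m ω) 2 μ := hD.sub (hD.condExp one_le_two)
  have hg : MemLp g 2 μ := he.indicator (sigmaAY_le hA hY s hs)
  have hW : MemLp W ∞ μ :=
    memLp_top_comp_of_forall_eq_zero_or_eq_one hR hRbin (f := fun r => r / p - 1) (by fun_prop)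
  have hDstar : MemLp Dstar 2 μ :=
    (he.mul (memLp_top_comp_of_forall_eq_zero_or_eq_one hR hRbin (f := (· / p)) (by fun_prop)))
      |>.add (hD.condExp one_le_two)
  have hDos : MemLp Dos 2 μ := by
    rw [show Dos = Dstar - W * g by rw [hsplit]; ring]
    exact hDstar.sub (hg.mul hW)
  have hW0 : μ[W] = 0 := integral_div_sub_one_of_forall_eq_zero_or_eq_one hR hRbin hp hp0.ne'
  have hg2 : μ[g ^ 2] = ∫ ω in s, (D ω - m ω) ^ 2 ∂μ := by
    rw [← integral_indicator (sigmaAY_le hA hY s hs)]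
    congr 1 with ω
    by_cases h : ω ∈ s <;> simp [g, h]
  rw [hsplit, variance_add_mul_of_indepFun hDos hW hg hW0
      (hW_indep g ((hDξ.sub hmξ).indicator hsξ))
      (hDos_g ▸ hW_indep _ ((hDξ.mul (hDξ.sub hmξ)).indicator hsξ)),
    Pi.pow_def, integral_div_sub_one_sq_of_forall_eq_zero_or_eq_one hR hRbin hp hp0.ne', hg2]
  ring

end Efficiency

theorem stmt18_general {Ω : Type*} [MeasurableSpace Ω] (μ : Measure Ω) [IsProbabilityMeasure μ]
    (Z A R Y D : Ω → ℝ)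
    (hAm : Measurable A) (hRm : Measurable R) (hYm : Measurable Y)
    (hAbin : ∀ ω, A ω = 0 ∨ A ω = 1)
    (hRbin : ∀ ω, R ω = 0 ∨ R ω = 1)
    -- D is a measurable function of (Z, A, Y)
    (hDm : Measurable[MeasurableSpace.comap (fun ω => (Z ω, A ω, Y ω)) inferInstance] D)
    (hD2 : MemLp D 2 μ)
    -- MCAR: R independent of (Z, A, Y)
    (hindep : IndepFun R (fun ω => (Z ω, A ω, Y ω)) μ)
    (p : ℝ) (hp : p = (μ {ω | R ω = 1}).toReal) (hppos : 0 < p) (hplt : p < 1)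
    (Rdag : Ω → ℝ) (hRdag : Rdag = fun ω => R ω * (1 - A ω) + A ω)
    (Dstar : Ω → ℝ)
    (hDstar : Dstar = fun ω =>
      (R ω / p) * (D ω - (μ[D | sigmaAY A Y]) ω) + (μ[D | sigmaAY A Y]) ω)
    (Dos : Ω → ℝ)
    (hDos : Dos = fun ω =>
      (Rdag ω / (A ω + (1 - A ω) * p)) * (D ω - (μ[D | sigmaAY A Y]) ω) +
        (μ[D | sigmaAY A Y]) ω) :
    variance Dstar μ - variance Dos μ =
      ((1 - p) / p) * cexp μ (condVarAY μ A Y D) {ω | A ω = 1} * (μ {ω | A ω = 1}).toReal ∧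
    (variance Dstar μ = variance Dos μ ↔
      μ {ω | A ω = 1} = 0 ∨ ∀ᵐ ω ∂μ, A ω = 1 → condVarAY μ A Y D ω = 0) := by
  have hAY : sigmaAY A Y ≤ MeasurableSpace.comap (fun ω => (Z ω, A ω, Y ω)) inferInstance :=
    (measurable_snd.comp (comap_measurable (fun ω => (Z ω, A ω, Y ω)))).comap_le
  have hs : MeasurableSet[sigmaAY A Y] {ω | A ω = 1} := measurableSet_sigmaAY_setOf_eq 1
  have hgap : variance Dstar μ - variance Dos μ =
      (1 - p) / p * ∫ ω in {ω | A ω = 1}, condVarAY μ A Y D ω ∂μ := by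
    subst hDstar hDos hRdag
    rw [setIntegral_condVarAY hAm hYm hD2 hs]
    exact variance_ipw_sub_variance_os μ hAm hRm hYm hAbin hRbin hAY hDm hD2 hindep hp hppos
  refine ⟨by rw [hgap, mul_assoc, cexp_mul_measure_toReal], ?_⟩
  have hodds : (1 - p) / p ≠ 0 := (div_pos (sub_pos.mpr hplt) hppos).ne'
  rw [← sub_eq_zero, hgap, mul_eq_zero, or_iff_right hodds,
    setIntegral_eq_zero_iff_ae_imp_of_nonneg (condVarAY_nonneg hAm hYm hD2)
      (integrable_condVarAY hAm hYm hD2) (sigmaAY_le hAm hYm _ hs)]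
  refine ⟨Or.inr, fun h => h.elim (fun hnull => ?_) id⟩
  filter_upwards [measure_eq_zero_iff_ae_notMem.mp hnull] with ω hω hA
  exact absurd hA hω

/-- The difference in efficiency bounds
`Var(D*) − Var(D_os) = odds(R=0)·E[Var(D|A,Y) | A=1]·P(A=1)` is zero if and only if
`P(A=1) = 0` or `Var(D | A,Y) = 0` almost surely on `{A=1}`. -/
theorem stmt18 {Ω : Type*} [MeasurableSpace Ω] (μ : Measure Ω) [IsProbabilityMeasure μ]
    (Z A R Y D : Ω → ℝ)
    (hZm : Measurable Z) (hAm : Measurable A) (hRm : Measurable R) (hYm : Measurable Y)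
    (hZbin : ∀ ω, Z ω = 0 ∨ Z ω = 1)
    (hAbin : ∀ ω, A ω = 0 ∨ A ω = 1)
    (hRbin : ∀ ω, R ω = 0 ∨ R ω = 1)
    -- D is a measurable function of (Z, A, Y)
    (hDm : Measurable[MeasurableSpace.comap (fun ω => (Z ω, A ω, Y ω)) inferInstance] D)
    (hD2 : MemLp D 2 μ) (hDmean : ∫ ω, D ω ∂μ = 0)
    -- MCAR: R independent of (Z, A, Y)
    (hindep : IndepFun R (fun ω => (Z ω, A ω, Y ω)) μ)
    (p : ℝ) (hp : p = (μ {ω | R ω = 1}).toReal) (hppos : 0 < p) (hplt : p < 1)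
    (Rdag : Ω → ℝ) (hRdag : Rdag = fun ω => R ω * (1 - A ω) + A ω)
    (Dstar : Ω → ℝ)
    (hDstar : Dstar = fun ω =>
      (R ω / p) * (D ω - (μ[D | sigmaAY A Y]) ω) + (μ[D | sigmaAY A Y]) ω)
    (Dos : Ω → ℝ)
    (hDos : Dos = fun ω =>
      (Rdag ω / (A ω + (1 - A ω) * p)) * (D ω - (μ[D | sigmaAY A Y]) ω) +
        (μ[D | sigmaAY A Y]) ω) :
    variance Dstar μ - variance Dos μ =
      ((1 - p) / p) * cexp μ (condVarAY μ A Y D) {ω | A ω = 1} * (μ {ω | A ω = 1}).toReal ∧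
    (variance Dstar μ = variance Dos μ ↔
      μ {ω | A ω = 1} = 0 ∨ ∀ᵐ ω ∂μ, A ω = 1 → condVarAY μ A Y D ω = 0) :=
  stmt18_general μ Z A R Y D hAm hRm hYm hAbin hRbin hDm hD2 hindep p hp hppos hplt Rdag hRdag Dstar
    hDstar Dos hDos
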